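/- Let μ > 0, m > 0, ν₁ > 0, ν₂ > 0, C > 0 and K ≥ max(1, (2C² + 1)/(μ·(min(ν₁, ν₂))⁴)) be real numbers, let ω = (ω₁, ω₂) ∈ ℝ² with ω₁² + ω₂² ≤ C², and let α, γ ∈ ℝ. Then for every s > 0 and every function y : ℤ² → ℂ, one has Σ_{j ∈ ℤ², j₁²+j₂² ≥ K} (1 + (j₁² + j₂²)^(s+2))·|y(j)|²/|Θ(j, ω, α, γ)|² ≤ Σ_{j ∈ ℤ², j₁²+j₂² ≥ K} (1 + (j₁² + j₂²)^s)·|y(j)|² (as an inequality of sums in [0, ∞]). In particular, if the right-hand side is finite, so is the left-hand side. -/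

import Mathlib

/-!
For `|j|² ≥ K` the quartic term `μ (ν₁² j₁² + ν₂² j₂²)² ≥ μ ν⁴ |j|⁴` (with `ν = min ν₁ ν₂`)
dominates the indefinite term `(ω · j)² ≤ C² |j|²` by at least `|j|²`, so `|Θ(j)| ≥ Re Θ(j) ≥ |j|²`.
Then `(1 + |j|^{2(s+2)}) / |Θ(j)|² ≤ 1 + |j|^{2s}` termwise, and the sums compare term by term.
-/

/-- The symbol `Θ(j, ω, α, γ)` of the linear operator `L_{ω,α,γ}`. -/
noncomputable def Theta (μ m ν₁ ν₂ : ℝ) (j₁ j₂ : ℤ) (ω₁ ω₂ α γ : ℝ) : ℂ :=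
  ((-(ω₁ * (j₁ : ℝ) + ω₂ * (j₂ : ℝ)) ^ 2 +
      μ * (ν₁ ^ 2 * (j₁ : ℝ) ^ 2 + ν₂ ^ 2 * (j₂ : ℝ) ^ 2) ^ 2 + m : ℝ) : ℂ) +
    Complex.I * ((α * (ω₁ * (j₁ : ℝ) + ω₂ * (j₂ : ℝ)) +
      γ * (ω₁ * (j₁ : ℝ) + ω₂ * (j₂ : ℝ)) *
        (ν₁ ^ 2 * (j₁ : ℝ) ^ 2 + ν₂ ^ 2 * (j₂ : ℝ) ^ 2) ^ 2 : ℝ) : ℂ)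

lemma sq_add_mul_le_mul_sq_add_sq (a b x y : ℝ) :
    (a * x + b * y) ^ 2 ≤ (a ^ 2 + b ^ 2) * (x ^ 2 + y ^ 2) := by
  nlinarith [sq_nonneg (a * y - b * x)]

lemma min_sq_mul_add_le {ν₁ ν₂ x y : ℝ} (hν₁ : 0 ≤ ν₁) (hν₂ : 0 ≤ ν₂) (hx : 0 ≤ x)
    (hy : 0 ≤ y) : min ν₁ ν₂ ^ 2 * (x + y) ≤ ν₁ ^ 2 * x + ν₂ ^ 2 * y := by
  have h₁ : min ν₁ ν₂ ^ 2 ≤ ν₁ ^ 2 :=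
    pow_le_pow_left₀ (le_min hν₁ hν₂) (min_le_left _ _) 2
  have h₂ : min ν₁ ν₂ ^ 2 ≤ ν₂ ^ 2 :=
    pow_le_pow_left₀ (le_min hν₁ hν₂) (min_le_right _ _) 2
  nlinarith [mul_le_mul_of_nonneg_right h₁ hx, mul_le_mul_of_nonneg_right h₂ hy]

section Theta

variable {μ m ν₁ ν₂ C ω₁ ω₂ : ℝ} (α γ : ℝ) (j₁ j₂ : ℤ)

lemma Theta_re :
    (Theta μ m ν₁ ν₂ j₁ j₂ ω₁ ω₂ α γ).re =
      -(ω₁ * (j₁ : ℝ) + ω₂ * (j₂ : ℝ)) ^ 2 +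
        μ * (ν₁ ^ 2 * (j₁ : ℝ) ^ 2 + ν₂ ^ 2 * (j₂ : ℝ) ^ 2) ^ 2 + m := by
  simp only [Theta, Complex.add_re, Complex.ofReal_re, Complex.mul_re, Complex.I_re,
    Complex.I_im, Complex.ofReal_im]
  ring

lemma sq_add_sq_le_Theta_re (hμ : 0 ≤ μ) (hm : 0 ≤ m) (hν₁ : 0 ≤ ν₁) (hν₂ : 0 ≤ ν₂)
    (hω : ω₁ ^ 2 + ω₂ ^ 2 ≤ C ^ 2)
    (hj : C ^ 2 + 1 ≤ μ * min ν₁ ν₂ ^ 4 * ((j₁ : ℝ) ^ 2 + (j₂ : ℝ) ^ 2)) :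
    (j₁ : ℝ) ^ 2 + (j₂ : ℝ) ^ 2 ≤ (Theta μ m ν₁ ν₂ j₁ j₂ ω₁ ω₂ α γ).re := by
  set R : ℝ := (j₁ : ℝ) ^ 2 + (j₂ : ℝ) ^ 2
  have hR : 0 ≤ R := by positivity
  have hdot : (ω₁ * (j₁ : ℝ) + ω₂ * (j₂ : ℝ)) ^ 2 ≤ C ^ 2 * R :=
    (sq_add_mul_le_mul_sq_add_sq _ _ _ _).trans (mul_le_mul_of_nonneg_right hω hR)
  have hquartic : min ν₁ ν₂ ^ 4 * R ^ 2 ≤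
      (ν₁ ^ 2 * (j₁ : ℝ) ^ 2 + ν₂ ^ 2 * (j₂ : ℝ) ^ 2) ^ 2 := by
    have h := min_sq_mul_add_le hν₁ hν₂ (sq_nonneg (j₁ : ℝ)) (sq_nonneg (j₂ : ℝ))
    calc min ν₁ ν₂ ^ 4 * R ^ 2 = (min ν₁ ν₂ ^ 2 * R) ^ 2 := by ring
      _ ≤ _ := pow_le_pow_left₀ (by positivity) h 2
  rw [Theta_re]
  nlinarith [mul_le_mul_of_nonneg_left hquartic hμ, mul_le_mul_of_nonneg_right hj hR]

lemma sq_add_sq_le_norm_Theta (hμ : 0 ≤ μ) (hm : 0 ≤ m) (hν₁ : 0 ≤ ν₁) (hν₂ : 0 ≤ ν₂)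
    (hω : ω₁ ^ 2 + ω₂ ^ 2 ≤ C ^ 2)
    (hj : C ^ 2 + 1 ≤ μ * min ν₁ ν₂ ^ 4 * ((j₁ : ℝ) ^ 2 + (j₂ : ℝ) ^ 2)) :
    (j₁ : ℝ) ^ 2 + (j₂ : ℝ) ^ 2 ≤ ‖Theta μ m ν₁ ν₂ j₁ j₂ ω₁ ω₂ α γ‖ :=
  (sq_add_sq_le_Theta_re α γ j₁ j₂ hμ hm hν₁ hν₂ hω hj).trans (Complex.re_le_norm _)

end Theta

lemma one_add_rpow_add_two_le {R T : ℝ} (s : ℝ) (hR : 1 ≤ R) (hT : R ≤ T) :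
    1 + R ^ (s + 2) ≤ (1 + R ^ s) * T ^ 2 := by
  have hRs : 0 < R ^ s := Real.rpow_pos_of_pos (by linarith) s
  have hT2 : R ^ 2 ≤ T ^ 2 := pow_le_pow_left₀ (by linarith) hT 2
  rw [Real.rpow_add (by linarith), Real.rpow_two]
  nlinarith [mul_le_mul_of_nonneg_left hT2 hRs.le]

lemma one_add_rpow_add_two_mul_div_le {R T a : ℝ} (s : ℝ) (hR : 1 ≤ R) (hT : R ≤ T)
    (ha : 0 ≤ a) : (1 + R ^ (s + 2)) * a / T ^ 2 ≤ (1 + R ^ s) * a := by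
  rw [div_le_iff₀ (by nlinarith)]
  nlinarith [mul_le_mul_of_nonneg_right (one_add_rpow_add_two_le s hR hT) ha]

theorem inverse_sum_bound_general
    (μ m ν₁ ν₂ C K : ℝ) (hμ : 0 < μ) (hm : 0 < m) (hν₁ : 0 < ν₁) (hν₂ : 0 < ν₂)
    (hK : max 1 ((2 * C ^ 2 + 1) / (μ * (min ν₁ ν₂) ^ 4)) ≤ K)
    (ω₁ ω₂ : ℝ) (hω : ω₁ ^ 2 + ω₂ ^ 2 ≤ C ^ 2)
    (α γ : ℝ) (s : ℝ) (y : ℤ × ℤ → ℂ) :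
    ∑' j : {j : ℤ × ℤ // K ≤ (j.1 : ℝ) ^ 2 + (j.2 : ℝ) ^ 2},
        ENNReal.ofReal ((1 + (((j : ℤ × ℤ).1 : ℝ) ^ 2 + ((j : ℤ × ℤ).2 : ℝ) ^ 2) ^ (s + 2)) *
          ‖y j‖ ^ 2 /
          ‖Theta μ m ν₁ ν₂ (j : ℤ × ℤ).1 (j : ℤ × ℤ).2 ω₁ ω₂ α γ‖ ^ 2) ≤
      ∑' j : {j : ℤ × ℤ // K ≤ (j.1 : ℝ) ^ 2 + (j.2 : ℝ) ^ 2},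
        ENNReal.ofReal ((1 + (((j : ℤ × ℤ).1 : ℝ) ^ 2 + ((j : ℤ × ℤ).2 : ℝ) ^ 2) ^ (s : ℝ)) *
          ‖y j‖ ^ 2) := by
  refine ENNReal.tsum_le_tsum fun ⟨⟨j₁, j₂⟩, hj⟩ => ENNReal.ofReal_le_ofReal ?_
  have hR : 1 ≤ (j₁ : ℝ) ^ 2 + (j₂ : ℝ) ^ 2 := (le_max_left _ _).trans (hK.trans hj)
  have hthreshold : C ^ 2 + 1 ≤ μ * min ν₁ ν₂ ^ 4 * ((j₁ : ℝ) ^ 2 + (j₂ : ℝ) ^ 2) := by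
    have hden : 0 < μ * min ν₁ ν₂ ^ 4 := by have := lt_min hν₁ hν₂; positivity
    have h := (le_max_right _ _).trans (hK.trans hj)
    rw [div_le_iff₀ hden] at h
    nlinarith [sq_nonneg C]
  exact one_add_rpow_add_two_mul_div_le s hR
    (sq_add_sq_le_norm_Theta α γ j₁ j₂ hμ.le hm.le hν₁.le hν₂.le hω hthreshold) (sq_nonneg _)

/-- Boundedness of the inverse of `L_{ω,α,γ}` on the high-frequency space `Y ∩ Hˢ`
(from the proof of Lemma 3.1 of the paper): the `Hˢ`-type sum of
`(1 + |j|^{2(s+2)}) |y_j|² / |Θ(j)|²` over `|j|² ≥ K` is controlled by the `Hˢ` norm of `y`. -/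
theorem inverse_sum_bound
    (μ m ν₁ ν₂ C K : ℝ) (hμ : 0 < μ) (hm : 0 < m) (hν₁ : 0 < ν₁) (hν₂ : 0 < ν₂)
    (hC : 0 < C)
    (hK : max 1 ((2 * C ^ 2 + 1) / (μ * (min ν₁ ν₂) ^ 4)) ≤ K)
    (ω₁ ω₂ : ℝ) (hω : ω₁ ^ 2 + ω₂ ^ 2 ≤ C ^ 2)
    (α γ : ℝ) (s : ℝ) (hs : 0 < s) (y : ℤ × ℤ → ℂ) :
    ∑' j : {j : ℤ × ℤ // K ≤ (j.1 : ℝ) ^ 2 + (j.2 : ℝ) ^ 2},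
        ENNReal.ofReal ((1 + (((j : ℤ × ℤ).1 : ℝ) ^ 2 + ((j : ℤ × ℤ).2 : ℝ) ^ 2) ^ (s + 2)) *
          ‖y j‖ ^ 2 /
          ‖Theta μ m ν₁ ν₂ (j : ℤ × ℤ).1 (j : ℤ × ℤ).2 ω₁ ω₂ α γ‖ ^ 2) ≤
      ∑' j : {j : ℤ × ℤ // K ≤ (j.1 : ℝ) ^ 2 + (j.2 : ℝ) ^ 2},
        ENNReal.ofReal ((1 + (((j : ℤ × ℤ).1 : ℝ) ^ 2 + ((j : ℤ × ℤ).2 : ℝ) ^ 2) ^ (s : ℝ)) *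
          ‖y j‖ ^ 2) :=
  inverse_sum_bound_general μ m ν₁ ν₂ C K hμ hm hν₁ hν₂ hK ω₁ ω₂ hω α γ s y
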